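/- Let Γ ≤ Aut(T) be a level-transitive branch group. Then Γ separates the boundary ∂T: for any finite subset Y ⊂ ∂T and any point w ∈ ∂T \ Y, the pointwise stabilizer of Y in Γ contains an element moving w. Consequently (by Abért's theorem), Γ satisfies no group law. -/

import Mathlib

open List

/-- Vertices of the regular rooted tree over alphabet `X`: finite words. -/
abbrev Vtx (X : Type*) := List X

section Tree

variable {X : Type*} [DecidableEq X]

/-- A permutation of the vertex set is a rooted-tree automorphism if it fixes the
root and maps children of a vertex to children of its image. -/
def IsTreeAut (f : Equiv.Perm (Vtx X)) : Prop :=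
  f [] = [] ∧ ∀ (w : Vtx X) (x : X), ∃ y : X, f (w ++ [x]) = f w ++ [y]

/-- The state (section) of `f` at the vertex `w`, as a function on vertices. -/
def stateFun (f : Equiv.Perm (Vtx X)) (w : Vtx X) : Vtx X → Vtx X :=
  fun t => (f (w ++ t)).drop w.length

/-- The rigid stabilizer of the vertex `v` in the full automorphism group:
all permutations moving only (proper or improper) descendants of `v`. -/
def rist (v : Vtx X) : Subgroup (Equiv.Perm (Vtx X)) where
  carrier := {g | ∀ w : Vtx X, ¬ v <+: w → g w = w}
  one_mem' := by intro w _; rfl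
  mul_mem' := by
    intro a b ha hb w hw
    have : (a * b) w = a (b w) := rfl
    rw [this, hb w hw, ha w hw]
  inv_mem' := by
    intro a ha w hw
    have h := ha w hw
    conv_lhs => rw [← h]
    simp

/-- The rigid stabilizer of `v` in `G`. -/
def ristG (G : Subgroup (Equiv.Perm (Vtx X))) (v : Vtx X) :
    Subgroup (Equiv.Perm (Vtx X)) :=
  rist v ⊓ G

/-- The `n`-th level rigid stabilizer of `G`: the subgroup generated by the
rigid stabilizers of all vertices of level `n`. -/
def ristLevel (G : Subgroup (Equiv.Perm (Vtx X))) (n : ℕ) :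
    Subgroup (Equiv.Perm (Vtx X)) :=
  ⨆ v ∈ {v : Vtx X | v.length = n}, ristG G v

/-- The `n`-th level stabilizer of `G`: elements fixing all vertices of level `≤ n`. -/
def stabLevel (G : Subgroup (Equiv.Perm (Vtx X))) (n : ℕ) :
    Subgroup (Equiv.Perm (Vtx X)) :=
  G ⊓ { carrier := {g | ∀ w : Vtx X, w.length ≤ n → g w = w}
        one_mem' := by intro w _; rfl
        mul_mem' := by
          intro a b ha hb w hw
          have : (a * b) w = a (b w) := rfl
          rw [this, hb w hw, ha w hw]
        inv_mem' := by
          intro a ha w hw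
          have h := ha w hw
          conv_lhs => rw [← h]
          simp }

/-- Underlying function of the vtr `v*g`. -/
def vtrFun (v : Vtx X) (g : Vtx X → Vtx X) : Vtx X → Vtx X :=
  fun w => if v <+: w then v ++ g (w.drop v.length) else w

lemma vtr_aux (v : Vtx X) (g h : Vtx X → Vtx X)
    (hgh : ∀ t, h (g t) = t) (w : Vtx X) :
    vtrFun v h (vtrFun v g w) = w := by
  by_cases hp : v <+: w
  · obtain ⟨t, rfl⟩ := hp
    simp [vtrFun, List.drop_left, hgh, List.prefix_append]
  · simp [vtrFun, hp]

/-- The vtr `v*g`: the automorphism acting as `g` on the subtree rooted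
at `v` and trivially elsewhere. -/
def vtr (v : Vtx X) (g : Equiv.Perm (Vtx X)) : Equiv.Perm (Vtx X) where
  toFun := vtrFun v g
  invFun := vtrFun v g.symm
  left_inv := vtr_aux v g g.symm fun t => g.symm_apply_apply t
  right_inv := vtr_aux v g.symm g fun t => g.apply_symm_apply t

lemma vtr_apply (v : Vtx X) (g : Equiv.Perm (Vtx X)) (w : Vtx X) :
    vtr v g w = if v <+: w then v ++ g (w.drop v.length) else w := rfl

/-- `g ↦ v*g` as a group homomorphism. -/
def vtrHom (v : Vtx X) : Equiv.Perm (Vtx X) →* Equiv.Perm (Vtx X) where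
  toFun := vtr v
  map_one' := by
    ext w
    by_cases hp : v <+: w
    · obtain ⟨t, rfl⟩ := hp
      simp [vtr, vtrFun, List.drop_left, List.prefix_append]
    · simp [vtr, vtrFun, hp]
  map_mul' := by
    intro a b
    ext w
    have hmul : (vtr v a * vtr v b) w = vtr v a (vtr v b w) := rfl
    rw [hmul]
    by_cases hp : v <+: w
    · obtain ⟨t, rfl⟩ := hp
      simp [vtr, vtrFun, List.drop_left, List.prefix_append]
    · simp [vtr, vtrFun, hp]

/-- `K` is a branching subgroup of `G`: `K ≤ G` and `v*K ≤ K` for all vertices. -/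
def IsBranching (G K : Subgroup (Equiv.Perm (Vtx X))) : Prop :=
  K ≤ G ∧ ∀ v : Vtx X, ∀ g ∈ K, vtr v g ∈ K

/-- The product `X^n * K` of the translates `v*K` over all vertices of level `n`. -/
def levelProd (K : Subgroup (Equiv.Perm (Vtx X))) (n : ℕ) :
    Subgroup (Equiv.Perm (Vtx X)) :=
  Subgroup.closure {p | ∃ v : Vtx X, v.length = n ∧ ∃ g ∈ K, p = vtr v g}

/-- The group `G⋉v` of states at `v` of the rigid stabilizer:
those `g ∈ G` with `v*g ∈ G`. -/
def pristSub (G : Subgroup (Equiv.Perm (Vtx X))) (v : Vtx X) :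
    Subgroup (Equiv.Perm (Vtx X)) :=
  G ⊓ G.comap (vtrHom v)

/-- `G_#`, the intersection of all `G⋉v` (the maximal branching subgroup when
`G` is regular branch). -/
def Gsharp (G : Subgroup (Equiv.Perm (Vtx X))) : Subgroup (Equiv.Perm (Vtx X)) :=
  ⨅ v : Vtx X, pristSub G v

/-- `G` is self-similar: all states of elements of `G` are (induced by) elements of `G`. -/
def SelfSimilar (G : Subgroup (Equiv.Perm (Vtx X))) : Prop :=
  ∀ g ∈ G, ∀ w : Vtx X, ∃ h ∈ G, ∀ t : Vtx X, h t = stateFun g w t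

/-- `G` is level-transitive: transitive on each level of the tree. -/
def LevelTransitive (G : Subgroup (Equiv.Perm (Vtx X))) : Prop :=
  ∀ v w : Vtx X, v.length = w.length → ∃ g ∈ G, g v = w

/-- `G` is recurrent: the state at `v` of the stabilizer of `v` is all of `G`. -/
def Recurrent (G : Subgroup (Equiv.Perm (Vtx X))) : Prop :=
  ∀ v : Vtx X, ∀ h : Equiv.Perm (Vtx X),
    (h ∈ G ↔ ∃ g ∈ G, g v = v ∧ ∀ t : Vtx X, h t = stateFun g v t)

/-- `G` is a regular branch group (for this action): it has a non-trivial
branching subgroup `K` with all products `X^n*K` of finite index in `G`. -/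
def RegularBranch (G : Subgroup (Equiv.Perm (Vtx X))) : Prop :=
  ∃ K : Subgroup (Equiv.Perm (Vtx X)), IsBranching G K ∧ K ≠ ⊥ ∧
    ∀ n : ℕ, ((levelProd K n).subgroupOf G).FiniteIndex

/-- The subgroup generated by `e`-th powers of elements of `H`. -/
def powSubgroup {P : Type*} [Group P] (H : Subgroup P) (e : ℕ) : Subgroup P :=
  Subgroup.closure {x | ∃ h ∈ H, x = h ^ e}

/-- The normal closure of `g` in the subgroup `Γ`. -/
def nclosure {P : Type*} [Group P] (Γ : Subgroup P) (g : P) : Subgroup P :=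
  Subgroup.closure {x | ∃ h ∈ Γ, x = h * g * h⁻¹}

/-- `g` is finite-state: it has only finitely many states. -/
def FiniteState (g : Equiv.Perm (Vtx X)) : Prop :=
  {f : Vtx X → Vtx X | ∃ w : Vtx X, f = stateFun g w}.Finite

/-- `g` fixes the boundary ray `y`, i.e. it fixes each of its finite prefixes. -/
def fixesRay (g : Equiv.Perm (Vtx X)) (y : ℕ → X) : Prop :=
  ∀ n : ℕ, g ((List.range n).map y) = (List.range n).map y

end Tree

/-- A group satisfies a (non-trivial) group law. -/
def SatisfiesLaw (G : Type*) [Group G] : Prop :=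
  ∃ w : FreeGroup ℕ, w ≠ 1 ∧ ∀ φ : FreeGroup ℕ →* G, φ w = 1

/-! Choose a level `n` below which every ray of `Y` has left `y₀`, and let `v` be the vertex of
`y₀` at level `n`. Some rigid vertex stabilizer at level `n` is nontrivial, since otherwise the
finite-index hypothesis would make `Γ` finite, which level-transitivity forbids. A nontrivial
element of it moves some vertex `u`, and conjugating by an element of `Γ` that carries `u` onto
`y₀` yields an element of `rist v` moving `y₀`. Every element of `rist v` fixes the rays avoiding
`v`, in particular all of `Y`. -/

namespace IsTreeAut

variable {X : Type*} {f : Equiv.Perm (Vtx X)}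

theorem exists_apply_append (hf : IsTreeAut f) (w t : Vtx X) :
    ∃ t' : Vtx X, t'.length = t.length ∧ f (w ++ t) = f w ++ t' := by
  induction t using List.reverseRecOn with
  | nil => exact ⟨[], rfl, by simp⟩
  | append_singleton s x ih =>
    obtain ⟨s', hlen, hs⟩ := ih
    obtain ⟨y, hy⟩ := hf.2 (w ++ s) x
    refine ⟨s' ++ [y], by simp [hlen], ?_⟩
    rw [← List.append_assoc, hy, hs, List.append_assoc]

theorem length_apply (hf : IsTreeAut f) (w : Vtx X) : (f w).length = w.length := by
  obtain ⟨t', hlen, ht⟩ := hf.exists_apply_append [] w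
  rw [List.nil_append, hf.1, List.nil_append] at ht
  rw [ht, hlen]

theorem apply_prefix (hf : IsTreeAut f) {v w : Vtx X} (h : v <+: w) : f v <+: f w := by
  obtain ⟨t, rfl⟩ := h
  obtain ⟨t', -, ht⟩ := hf.exists_apply_append v t
  exact ht ▸ List.prefix_append _ _

theorem conj_mem_rist (hf : IsTreeAut f) {v : Vtx X} {h : Equiv.Perm (Vtx X)}
    (hh : h ∈ rist v) : f * h * f⁻¹ ∈ rist (f v) := by
  intro w hw
  have hnp : ¬ v <+: f⁻¹ w := fun hp => hw (by simpa using hf.apply_prefix hp)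
  change f (h (f⁻¹ w)) = w
  rw [hh _ hnp]
  exact f.apply_symm_apply w

end IsTreeAut

theorem exists_ne_apply_of_mem_rist {X : Type*} {v : Vtx X}
    {h : Equiv.Perm (Vtx X)} (hh : h ∈ rist v) (h1 : h ≠ 1) : ∃ u, v <+: u ∧ h u ≠ u := by
  by_contra! hfix
  exact h1 (Equiv.ext fun u => by_cases (hfix u) (hh u))

section Rays

variable {X : Type*}

def rayPrefix (y : ℕ → X) (n : ℕ) : Vtx X := (List.range n).map y

@[simp]
theorem length_rayPrefix (y : ℕ → X) (n : ℕ) : (rayPrefix y n).length = n := by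
  simp [rayPrefix]

theorem take_rayPrefix (y : ℕ → X) {m n : ℕ} (h : n ≤ m) :
    (rayPrefix y m).take n = rayPrefix y n := by
  rw [rayPrefix, ← List.map_take, List.take_range, Nat.min_eq_left h, rayPrefix]

theorem eq_rayPrefix_of_prefix {y : ℕ → X} {v : Vtx X} {m : ℕ} (h : v <+: rayPrefix y m) :
    v = rayPrefix y v.length := by
  have hle : v.length ≤ m := by simpa using h.length_le
  conv_lhs => rw [List.prefix_iff_eq_take.mp h]
  exact take_rayPrefix y hle

theorem rayPrefix_ne_of_ne {y z : ℕ → X} {k n : ℕ} (hk : k < n) (h : y k ≠ z k) :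
    rayPrefix y n ≠ rayPrefix z n := by
  intro he
  have := congrArg (fun l : Vtx X => l[k]?) he
  simp_all [rayPrefix]

theorem fixesRay_of_mem_rist {g : Equiv.Perm (Vtx X)} {y y₀ : ℕ → X} {k n : ℕ}
    (hg : g ∈ rist (rayPrefix y₀ n)) (hk : k < n) (hne : y k ≠ y₀ k) : fixesRay g y := by
  intro m
  refine hg _ fun hpre => rayPrefix_ne_of_ne hk hne ?_
  rw [eq_rayPrefix_of_prefix hpre, length_rayPrefix]

theorem exists_separating_level {Y : Set (ℕ → X)} (hY : Y.Finite) {y₀ : ℕ → X} (hy₀ : y₀ ∉ Y) :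
    ∃ n, ∀ y ∈ Y, ∃ k < n, y k ≠ y₀ k := by
  have hne : ∀ y ∈ Y, ∃ k, y k ≠ y₀ k := fun y hy => by
    by_contra! h
    exact hy₀ (funext h ▸ hy)
  choose! k hk using hne
  obtain ⟨N, hN⟩ := (hY.image k).bddAbove
  exact ⟨N + 1, fun y hy => ⟨k y, Nat.lt_succ_of_le (hN ⟨y, hy, rfl⟩), hk y hy⟩⟩

end Rays

namespace LevelTransitive

variable {X : Type*} [Fintype X] {Γ : Subgroup (Equiv.Perm (Vtx X))}

theorem pow_card_le_natCard [Nonempty X] [Finite Γ] (hAut : ∀ g ∈ Γ, IsTreeAut g)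
    (hLT : LevelTransitive Γ) (n : ℕ) : Fintype.card X ^ n ≤ Nat.card Γ := by
  obtain ⟨x₀⟩ := ‹Nonempty X›
  let orbitMap : Γ → List.Vector X n := fun g =>
    ⟨(g : Equiv.Perm (Vtx X)) (List.replicate n x₀), by
      rw [(hAut g g.2).length_apply, List.length_replicate]⟩
  have hsurj : Function.Surjective orbitMap := by
    rintro ⟨w, hw⟩
    obtain ⟨g, hgΓ, hgw⟩ := hLT (List.replicate n x₀) w (by simp [hw])
    exact ⟨⟨g, hgΓ⟩, Subtype.ext hgw⟩
  simpa [card_vector] using Nat.card_le_card_of_surjective orbitMap hsurj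

theorem infinite [Nontrivial X] (hAut : ∀ g ∈ Γ, IsTreeAut g) (hLT : LevelTransitive Γ) :
    Infinite Γ := by
  by_contra hfin
  rw [not_infinite_iff_finite] at hfin
  have hle := hLT.pow_card_le_natCard hAut (Nat.card Γ)
  have htwo : 2 ^ Nat.card Γ ≤ Fintype.card X ^ Nat.card Γ :=
    Nat.pow_le_pow_left Fintype.one_lt_card _
  have := Nat.lt_two_pow_self (n := Nat.card Γ)
  omega

theorem exists_ne_one_mem_ristG [Nontrivial X] (hAut : ∀ g ∈ Γ, IsTreeAut g)
    (hLT : LevelTransitive Γ) {n : ℕ} (hbr : ((ristLevel Γ n).subgroupOf Γ).FiniteIndex) :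
    ∃ v : Vtx X, v.length = n ∧ ∃ h ∈ ristG Γ v, h ≠ 1 := by
  by_contra! htriv
  have hbot : ristLevel Γ n = ⊥ :=
    le_bot_iff.mp (iSup₂_le fun v hv h hh => Subgroup.mem_bot.mpr (htriv v hv h hh))
  rw [hbot, Subgroup.bot_subgroupOf] at hbr
  have hcard := hbr.index_ne_zero
  rw [Subgroup.index_bot, Nat.card_ne_zero] at hcard
  exact not_finite_iff_infinite.mpr (hLT.infinite hAut) hcard.2

theorem exists_mem_ristG_not_fixesRay [Nontrivial X] (hAut : ∀ g ∈ Γ, IsTreeAut g)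
    (hLT : LevelTransitive Γ) {n : ℕ} (hbr : ((ristLevel Γ n).subgroupOf Γ).FiniteIndex)
    (y₀ : ℕ → X) : ∃ g ∈ ristG Γ (rayPrefix y₀ n), ¬ fixesRay g y₀ := by
  obtain ⟨v, hv, h, ⟨hh, hhΓ⟩, h1⟩ := hLT.exists_ne_one_mem_ristG hAut hbr
  obtain ⟨u, hvu, hu⟩ := exists_ne_apply_of_mem_rist hh h1
  obtain ⟨g, hgΓ, hgu⟩ := hLT u (rayPrefix y₀ u.length) (length_rayPrefix _ _).symm
  have hgv : g v = rayPrefix y₀ n := by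
    have hpre := (hAut g hgΓ).apply_prefix hvu
    rw [hgu] at hpre
    rw [eq_rayPrefix_of_prefix hpre, (hAut g hgΓ).length_apply, hv]
  have hconj : g * h * g⁻¹ ∈ ristG Γ (rayPrefix y₀ n) :=
    Subgroup.mem_inf.mpr ⟨hgv ▸ (hAut g hgΓ).conj_mem_rist hh,
      Γ.mul_mem (Γ.mul_mem hgΓ hhΓ) (Γ.inv_mem hgΓ)⟩
  refine ⟨g * h * g⁻¹, hconj, fun hfix => hu ?_⟩
  have hmoved := hfix u.length
  rw [← rayPrefix, ← hgu] at hmoved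
  simpa using hmoved

end LevelTransitive

theorem branch_group_separates_boundary_general
    {X : Type*} [Fintype X] [Nontrivial X]
    (Γ : Subgroup (Equiv.Perm (Vtx X))) (hAut : ∀ g ∈ Γ, IsTreeAut g)
    (hLT : LevelTransitive Γ)
    (hbr : ∀ n : ℕ, ((ristLevel Γ n).subgroupOf Γ).FiniteIndex) :
    ∀ Y : Set (ℕ → X), Y.Finite → ∀ y₀ : ℕ → X, y₀ ∉ Y →
      ∃ g ∈ Γ, (∀ y ∈ Y, fixesRay g y) ∧ ¬ fixesRay g y₀ := by
  intro Y hY y₀ hy₀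
  obtain ⟨n, hn⟩ := exists_separating_level hY hy₀
  obtain ⟨g, ⟨hg, hgΓ⟩, hmoves⟩ := hLT.exists_mem_ristG_not_fixesRay hAut (hbr n) y₀
  refine ⟨g, hgΓ, fun y hy => ?_, hmoves⟩
  obtain ⟨k, hk, hne⟩ := hn y hy
  exact fixesRay_of_mem_rist hg hk hne

/-- a level-transitive branch group separates the boundary of the
tree: the pointwise stabilizer of a finite set `Y` of rays fixes no ray outside
`Y`. -/
theorem branch_group_separates_boundary
    {X : Type*} [DecidableEq X] [Fintype X] [Nontrivial X]
    (Γ : Subgroup (Equiv.Perm (Vtx X))) (hAut : ∀ g ∈ Γ, IsTreeAut g)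
    (hLT : LevelTransitive Γ)
    (hbr : ∀ n : ℕ, ((ristLevel Γ n).subgroupOf Γ).FiniteIndex) :
    ∀ Y : Set (ℕ → X), Y.Finite → ∀ y₀ : ℕ → X, y₀ ∉ Y →
      ∃ g ∈ Γ, (∀ y ∈ Y, fixesRay g y) ∧ ¬ fixesRay g y₀ :=
  branch_group_separates_boundary_general Γ hAut hLT hbr
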